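/- arXiv:0809.5110 — 3 statements merged into one kernel-verified Lean document; each statement's English description precedes it below -/
import Mathlib

section
/- With the transported shuffle product ш as above, for positive integers k ≥ 2 and n ≥ k: z_1 ш (∑_{s1 ≥ 2, s2,...,s_{k-1} ≥ 1, s1+...+s_{k-1} = n-1} z_{s1,...,s_{k-1}}) = ∑_{t1 = 1, t2 ≥ 2, ti ≥ 1, ∑ti = n} z_{t1,...,tk} + k ∑_{t1 ≥ 2, tk = 1, ti ≥ 1, ∑ti = n} z_{t1,...,tk} + (k-1) ∑_{t1 ≥ 2, tk ≥ 2, ti ≥ 1, ∑ti = n} z_{t1,...,tk}. -/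
open Finsupp

/-- The free ℤ-module on words in the two letters `x₀, x₁`
(`false` plays the role of `x₀` and `true` the role of `x₁`). -/
abbrev XWords : Type := (List Bool) →₀ ℤ

/-- The free ℤ-module on words `z_{s₁,…,s_k}` (a word is the list of its indices). -/
abbrev QWords : Type := (List ℕ) →₀ ℤ

/-- A word in `x₀, x₁` as a basis element. -/
noncomputable def xw (l : List Bool) : XWords := Finsupp.single l 1

/-- The word `z_{s₁,…,s_k}` as a basis element. -/
noncomputable def zw (l : List ℕ) : QWords := Finsupp.single l 1

/-- The bijection `z_{s₁,…,s_k} ↔ x₀^{s₁-1} x₁ ⋯ x₀^{s_k-1} x₁` on words. -/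
def encodeWord : List ℕ → List Bool
  | [] => []
  | s :: t => List.replicate (s - 1) false ++ true :: encodeWord t

/-!
In the alphabet `x₀, x₁`, the shuffle `x₁ ш w` is the sum of the `|w| + 1` words obtained by
inserting one `x₁` into `w`; on indices this insertion is `insertOne`. So the left-hand side is
`∑ N(t) z_t`, where `N(t)` counts the letters `x₁` of the word of `t` whose deletion leaves an
admissible word (first letter `x₀`, last letter `x₁`). If `t₁ = 1`, only the first letter
can be deleted, and this works iff `t₂ ≥ 2`. If `t₁ ≥ 2`, each of the `k` letters `x₁` works
except possibly the last one, which works iff it is preceded by `x₁`, i.e. iff `t_k = 1`.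
-/

section

open Finset

theorem encodeWord_append (s t : List ℕ) :
    encodeWord (s ++ t) = encodeWord s ++ encodeWord t := by
  induction s with
  | nil => rfl
  | cons a s ih => simp [encodeWord, ih]

theorem length_encodeWord {s : List ℕ} (hs : ∀ x ∈ s, 0 < x) :
    (encodeWord s).length = s.sum := by
  induction s with
  | nil => rfl
  | cons a s ih =>
    have ha : 0 < a := hs a List.mem_cons_self
    simp only [encodeWord, List.length_append, List.length_replicate, List.length_cons,
      List.sum_cons, ih fun x hx => hs x (List.mem_cons_of_mem a hx)]
    omega

theorem count_encodeWord (s : List ℕ) : (encodeWord s).count true = s.length := by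
  induction s with
  | nil => rfl
  | cons a s ih => simp [encodeWord, List.count_replicate, ih]

theorem getLast?_encodeWord {s : List ℕ} (hs : s ≠ []) :
    (encodeWord s).getLast? = some true := by
  obtain ⟨r, b, rfl⟩ := List.eq_nil_or_concat s |>.resolve_left hs
  simp [encodeWord_append, encodeWord]

theorem head?_encodeWord_eq_some_false {s : List ℕ} (hs : ∀ x ∈ s, 0 < x) :
    (encodeWord s).head? = some false ↔ 2 ≤ s.headI := by
  cases s with
  | nil => simp [encodeWord]
  | cons a s =>
    have ha : 0 < a := hs a List.mem_cons_self
    rcases Nat.lt_or_ge a 2 with h | h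
    · obtain rfl : a = 1 := by omega
      simp [encodeWord]
    · obtain ⟨b, rfl⟩ : ∃ b, a = b + 2 := ⟨a - 2, by omega⟩
      simp [encodeWord, List.replicate_succ]

theorem replicate_false_append_true_cons_inj {p q : ℕ} {u v : List Bool}
    (h : List.replicate p false ++ true :: u = List.replicate q false ++ true :: v) :
    p = q ∧ u = v := by
  induction p generalizing q with
  | zero => cases q <;> simp_all [List.replicate_succ]
  | succ p ih =>
    cases q with
    | zero => simp [List.replicate_succ] at h
    | succ q => simpa [List.replicate_succ] using ih (by simpa [List.replicate_succ] using h)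

theorem encodeWord_injOn : Set.InjOn encodeWord {s | ∀ x ∈ s, 0 < x} := by
  intro s hs t ht hst
  induction s generalizing t with
  | nil => cases t <;> simp_all [encodeWord]
  | cons a s ih =>
    cases t with
    | nil => simp [encodeWord] at hst
    | cons b t =>
      obtain ⟨hab, hst'⟩ := replicate_false_append_true_cons_inj hst
      have ha := hs a List.mem_cons_self
      have hb := ht b List.mem_cons_self
      rw [ih (fun x hx => hs x (List.mem_cons_of_mem a hx))
        (fun x hx => ht x (List.mem_cons_of_mem b hx)) hst']
      congr 1
      omega

theorem exists_encodeWord_eq_append_true (u : List Bool) :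
    ∃ s, (∀ x ∈ s, 0 < x) ∧ encodeWord s = u ++ [true] := by
  induction u with
  | nil => exact ⟨[1], by simp, rfl⟩
  | cons b u ih =>
    obtain ⟨s, hs, hsu⟩ := ih
    cases b with
    | true => exact ⟨1 :: s, by simpa using hs, by simp [encodeWord, hsu]⟩
    | false =>
      obtain ⟨a, r, rfl⟩ : ∃ a r, s = a :: r := by
        cases s with
        | nil => simp [encodeWord] at hsu
        | cons a r => exact ⟨a, r, rfl⟩
      have ha := hs a List.mem_cons_self
      refine ⟨(a + 1) :: r, ?_, ?_⟩
      · simpa using fun x hx => hs x (List.mem_cons_of_mem a hx)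
      · obtain ⟨b, rfl⟩ : ∃ b, a = b + 1 := ⟨a - 1, by omega⟩
        simp_all [encodeWord, List.replicate_succ]

/-- Inserting `x₁` at offset `j < a` into the block `x₀^(a-1) x₁` gives `x₀^j x₁ x₀^(a-1-j) x₁`. -/
def insertOne : ℕ → List ℕ → List ℕ
  | _, [] => [1]
  | j, a :: s => if j < a then (j + 1) :: (a - j) :: s else a :: insertOne (j - a) s

theorem sum_insertOne (j : ℕ) (s : List ℕ) : (insertOne j s).sum = s.sum + 1 := by
  induction s generalizing j with
  | nil => rfl
  | cons a s ih =>
    unfold insertOne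
    split_ifs with h
    · simp only [List.sum_cons]; omega
    · simp only [List.sum_cons, ih]; omega

theorem length_insertOne (j : ℕ) (s : List ℕ) : (insertOne j s).length = s.length + 1 := by
  induction s generalizing j with
  | nil => rfl
  | cons a s ih =>
    unfold insertOne
    split_ifs <;> simp [ih]

theorem pos_of_mem_insertOne {j : ℕ} {s : List ℕ} (hs : ∀ x ∈ s, 0 < x) :
    ∀ x ∈ insertOne j s, 0 < x := by
  induction s generalizing j with
  | nil => simp [insertOne]
  | cons a s ih =>
    have hs' := fun x hx => hs x (List.mem_cons_of_mem a hx)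
    unfold insertOne
    split_ifs with h
    · simp only [List.mem_cons]
      rintro x (rfl | rfl | hx) <;> first | omega | exact hs' x hx
    · simp only [List.mem_cons]
      rintro x (rfl | hx)
      · exact hs _ List.mem_cons_self
      · exact ih hs' x hx

theorem List.insertIdx_append_length_add {α : Type*} (l₁ l₂ : List α) (i : ℕ) (x : α) :
    (l₁ ++ l₂).insertIdx (l₁.length + i) x = l₁ ++ l₂.insertIdx i x := by
  induction l₁ with
  | nil => simp
  | cons a l₁ ih => rw [List.length_cons, Nat.add_right_comm, List.cons_append,
      List.insertIdx_succ_cons, ih, List.cons_append]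

theorem encodeWord_insertOne {j : ℕ} {s : List ℕ} (hs : ∀ x ∈ s, 0 < x) (hj : j ≤ s.sum) :
    encodeWord (insertOne j s) = (encodeWord s).insertIdx j true := by
  induction s generalizing j with
  | nil =>
    obtain rfl : j = 0 := by simpa using hj
    rfl
  | cons a s ih =>
    have ha := hs a List.mem_cons_self
    unfold insertOne
    split_ifs with h
    · have key := List.insertIdx_append_length_add (List.replicate j false)
        (List.replicate (a - 1 - j) false ++ true :: encodeWord s) 0 true
      rw [List.length_replicate, Nat.add_zero, List.insertIdx_zero, ← List.append_assoc,
        ← List.replicate_add, show j + (a - 1 - j) = a - 1 by omega] at key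
      simp only [encodeWord, key, Nat.add_sub_cancel, show a - j - 1 = a - 1 - j by omega]
    · have key := List.insertIdx_append_length_add (List.replicate (a - 1) false ++ [true])
        (encodeWord s) (j - a) true
      rw [List.length_append, List.length_replicate, List.length_singleton,
        show a - 1 + 1 + (j - a) = j by omega] at key
      simp only [encodeWord, List.sum_cons] at hj ⊢
      rw [ih (fun x hx => hs x (List.mem_cons_of_mem a hx)) (by omega)]
      simpa using key.symm

def Composition.insertOne {m : ℕ} (c : Composition m) (j : ℕ) : Composition (m + 1) where
  blocks := _root_.insertOne j c.blocks
  blocks_pos := pos_of_mem_insertOne (fun _ => c.blocks_pos) _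
  blocks_sum := by rw [sum_insertOne, c.blocks_sum]

theorem Composition.length_insertOne {m : ℕ} (c : Composition m) (j : ℕ) :
    (c.insertOne j).length = c.length + 1 := by
  simp only [← Composition.blocks_length, Composition.insertOne, _root_.length_insertOne]

theorem encodeWord_insertOne_blocks {m : ℕ} (c : Composition m) {j : ℕ} (hj : j ≤ m) :
    encodeWord (c.insertOne j).blocks = (encodeWord c.blocks).insertIdx j true :=
  encodeWord_insertOne (fun _ => c.blocks_pos) (by rw [c.blocks_sum]; exact hj)

theorem shuffle_singleton_left (sh : XWords →ₗ[ℤ] XWords →ₗ[ℤ] XWords)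
    (hsunitl : ∀ w : XWords, sh (xw []) w = w)
    (hsunitr : ∀ w : XWords, sh w (xw []) = w)
    (hsrec : ∀ (a b : Bool) (u v : List Bool),
      sh (xw (a :: u)) (xw (b :: v)) =
        Finsupp.mapDomain (List.cons a) (sh (xw u) (xw (b :: v))) +
          Finsupp.mapDomain (List.cons b) (sh (xw (a :: u)) (xw v)))
    (a : Bool) (w : List Bool) :
    sh (xw [a]) (xw w) = ∑ j ∈ range (w.length + 1), xw (w.insertIdx j a) := by
  induction w with
  | nil => simpa using hsunitr (xw [a])
  | cons b v ih =>
    rw [hsrec, hsunitl, ih, Finsupp.mapDomain_finsetSum, List.length_cons,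
      sum_range_succ' _ (v.length + 1)]
    simp only [xw, Finsupp.mapDomain_single, List.insertIdx_succ_cons, List.insertIdx_zero]
    rw [add_comm]

theorem mapDomain_encodeWord_injOn :
    Set.InjOn (Finsupp.mapDomain encodeWord : QWords → XWords)
      {f | ∀ s ∈ f.support, ∀ x ∈ s, 0 < x} :=
  Finsupp.mapDomain_injOn _ encodeWord_injOn

theorem pos_of_mem_support_sum_zw {ι : Type*} (I : Finset ι) (g : ι → List ℕ)
    (hg : ∀ i ∈ I, ∀ x ∈ g i, 0 < x) :
    ∀ s ∈ (∑ i ∈ I, zw (g i)).support, ∀ x ∈ s, 0 < x := by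
  intro s hs
  obtain ⟨i, hi, hs⟩ := mem_biUnion.1 (Finsupp.support_finsetSum hs)
  rw [mem_singleton.1 (Finsupp.support_single_subset hs)]
  exact hg i hi

theorem msh_zw_one_composition (sh : XWords →ₗ[ℤ] XWords →ₗ[ℤ] XWords)
    (msh : QWords →ₗ[ℤ] QWords →ₗ[ℤ] QWords)
    (hsupp : ∀ u v : List ℕ, (∀ x ∈ u, 1 ≤ x) → (∀ x ∈ v, 1 ≤ x) →
      ∀ l ∈ (msh (zw u) (zw v)).support, ∀ x ∈ l, 1 ≤ x)
    (hcompat : ∀ u v : List ℕ, (∀ x ∈ u, 1 ≤ x) → (∀ x ∈ v, 1 ≤ x) →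
      Finsupp.mapDomain encodeWord (msh (zw u) (zw v)) =
        sh (xw (encodeWord u)) (xw (encodeWord v)))
    (hsh : ∀ w : List Bool,
      sh (xw [true]) (xw w) = ∑ j ∈ range (w.length + 1), xw (w.insertIdx j true))
    {m : ℕ} (c : Composition m) :
    msh (zw [1]) (zw c.blocks) = ∑ j ∈ range (m + 1), zw (c.insertOne j).blocks := by
  have h1 : ∀ x ∈ [1], 0 < x := by simp
  apply mapDomain_encodeWord_injOn (hsupp _ _ h1 fun _ => c.blocks_pos)
    (pos_of_mem_support_sum_zw _ _ fun j _ _ => (c.insertOne j).blocks_pos)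
  rw [hcompat _ _ h1 fun _ => c.blocks_pos, Finsupp.mapDomain_finsetSum,
    show encodeWord [1] = [true] from rfl, hsh, length_encodeWord fun _ => c.blocks_pos,
    c.blocks_sum]
  refine sum_congr rfl fun j hj => ?_
  rw [zw, Finsupp.mapDomain_single, encodeWord_insertOne_blocks c (Nat.lt_succ_iff.1
    (mem_range.1 hj))]
  rfl

def IsAdmissibleWord (w : List Bool) : Prop := w.head? = some false ∧ w.getLast? = some true

instance : DecidablePred IsAdmissibleWord := fun _ => inferInstanceAs (Decidable (_ ∧ _))

def admissibleErasures (u : List Bool) : Finset ℕ :=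
  {j ∈ range u.length | u[j]? = some true ∧ IsAdmissibleWord (u.eraseIdx j)}

theorem card_filter_getElem?_eq_some {α : Type*} [DecidableEq α] (u : List α) (a : α) :
    #{j ∈ range u.length | u[j]? = some a} = u.count a := by
  induction u with
  | nil => rfl
  | cons b u ih =>
    rw [card_filter, List.length_cons, sum_range_succ']
    simp only [List.getElem?_cons_succ, List.getElem?_cons_zero]
    rw [← card_filter, ih, List.count_cons]
    simp only [Option.some_inj, beq_iff_eq]

theorem count_eraseIdx_add_one {α : Type*} [DecidableEq α] {u : List α} {j : ℕ} {a : α}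
    (h : u[j]? = some a) : (u.eraseIdx j).count a + 1 = u.count a := by
  obtain ⟨hj, rfl⟩ := List.getElem?_eq_some_iff.1 h
  have hperm := List.perm_insertIdx u[j] (u.eraseIdx j) (i := j)
    (by rw [List.length_eraseIdx_of_lt hj]; omega)
  rw [← List.count_cons_self, ← hperm.count_eq, List.insertIdx_eraseIdx_getElem]

theorem mem_admissibleErasures {u : List Bool} {j : ℕ} :
    j ∈ admissibleErasures u ↔ u[j]? = some true ∧ IsAdmissibleWord (u.eraseIdx j) := by
  rw [admissibleErasures, mem_filter, mem_range, and_iff_right_iff_imp.2]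
  exact fun h => (List.getElem?_eq_some_iff.1 h.1).1

theorem card_admissibleErasures_true_cons (w : List Bool) :
    #(admissibleErasures (true :: w)) = if IsAdmissibleWord w then 1 else 0 := by
  have : admissibleErasures (true :: w) = if IsAdmissibleWord w then {0} else ∅ := by
    ext j
    rw [mem_admissibleErasures]
    rcases j with _ | j <;> split_ifs <;> simp_all [IsAdmissibleWord]
  rw [this]
  split_ifs <;> rfl

theorem card_admissibleErasures_append_true {w : List Bool} (hw : w.head? = some false) :
    #(admissibleErasures (w ++ [true])) + (if w.getLast? = some true then 0 else 1) =
      (w ++ [true]).count true := by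
  set T : Finset ℕ := {j ∈ range (w ++ [true]).length | (w ++ [true])[j]? = some true}
  have hT : #T = (w ++ [true]).count true := card_filter_getElem?_eq_some _ _
  have hlast : w.length ∈ T := by simp [T]
  have hpos : ∀ {j}, (w ++ [true])[j]? = some true → 0 < j := by
    rintro (_ | j) h
    · rw [← List.head?_eq_getElem?, List.head?_append, hw] at h
      simp at h
    · exact j.succ_pos
  have hhead : ∀ {j}, 0 < j → ((w ++ [true]).eraseIdx j).head? = some false := by
    intro j hj
    rw [List.head?_eq_getElem?, List.getElem?_eraseIdx, if_pos hj, ← List.head?_eq_getElem?,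
      List.head?_append, hw]
    rfl
  have hmem : ∀ {j}, j ∈ admissibleErasures (w ++ [true]) ↔
      (w ++ [true])[j]? = some true ∧ ((w ++ [true]).eraseIdx j).getLast? = some true := by
    intro j
    rw [mem_admissibleErasures, IsAdmissibleWord]
    exact ⟨fun h => ⟨h.1, h.2.2⟩, fun h => ⟨h.1, hhead (hpos h.1), h.2⟩⟩
  have hmemT : ∀ {j}, j ∈ T ↔ (w ++ [true])[j]? = some true := by
    intro j
    rw [mem_filter, mem_range, and_iff_right_iff_imp.2]
    exact fun h => (List.getElem?_eq_some_iff.1 h).1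
  have hE : admissibleErasures (w ++ [true]) =
      if w.getLast? = some true then T else T.erase w.length := by
    ext j
    rw [hmem]
    rcases lt_trichotomy j w.length with hj | rfl | hj
    · rw [List.eraseIdx_append_of_lt_length hj, List.getLast?_concat]
      split_ifs <;> simp [hmemT, hj.ne]
    · rw [List.eraseIdx_append_of_length_le le_rfl, Nat.sub_self, List.getElem?_concat_length]
      split_ifs with h <;> simp [hlast, h]
    · have : (w ++ [true])[j]? = none := List.getElem?_eq_none (by simpa using hj)
      split_ifs <;> simp [hmemT, this]
  rw [hE, ← hT]
  split_ifs
  · rfl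
  · rw [card_erase_of_mem hlast]
    have : 0 < T.card := card_pos.2 ⟨_, hlast⟩
    omega

theorem ne_nil_of_two_le_headI {s : List ℕ} (h : 2 ≤ s.headI) : s ≠ [] := by
  rintro rfl
  simp at h

theorem isAdmissibleWord_encodeWord_iff {s : List ℕ} (hs : ∀ x ∈ s, 0 < x) :
    IsAdmissibleWord (encodeWord s) ↔ 2 ≤ s.headI :=
  ⟨fun h => (head?_encodeWord_eq_some_false hs).1 h.1,
    fun h => ⟨(head?_encodeWord_eq_some_false hs).2 h,
      getLast?_encodeWord (ne_nil_of_two_le_headI h)⟩⟩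

theorem card_admissibleErasures_encodeWord_of_headI_eq_one {n : ℕ} (t : Composition n)
    (h : t.blocks.headI = 1) :
    #(admissibleErasures (encodeWord t.blocks)) = if 2 ≤ t.blocks.tail.headI then 1 else 0 := by
  obtain ⟨r, hr⟩ : ∃ r, t.blocks = 1 :: r := by
    cases hb : t.blocks with
    | nil => simp [hb] at h
    | cons a r => exact ⟨r, by simp_all⟩
  have hpos : ∀ x ∈ r, 0 < x := fun x hx => t.blocks_pos (hr ▸ List.mem_cons_of_mem 1 hx)
  rw [hr, show encodeWord (1 :: r) = true :: encodeWord r from rfl,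
    card_admissibleErasures_true_cons, List.tail_cons]
  simp only [isAdmissibleWord_encodeWord_iff hpos]

theorem card_admissibleErasures_encodeWord_add {n : ℕ} (t : Composition n)
    (h1 : 2 ≤ t.blocks.headI) (hlen : 2 ≤ t.length) :
    #(admissibleErasures (encodeWord t.blocks)) + (if t.blocks.getLastD 0 = 1 then 0 else 1) =
      t.length := by
  obtain ⟨r, b, hrb⟩ := List.eq_nil_or_concat t.blocks |>.resolve_left
    (ne_nil_of_two_le_headI h1)
  rw [List.concat_eq_append] at hrb
  have hr : r ≠ [] := List.ne_nil_of_length_pos <| by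
    have := t.blocks_length
    simp only [hrb, List.length_append, List.length_singleton] at this
    omega
  set w := encodeWord r ++ List.replicate (b - 1) false
  have htw : encodeWord t.blocks = w ++ [true] := by
    simp [w, hrb, encodeWord_append, encodeWord]
  have hw : w.head? = some false := by
    have := (head?_encodeWord_eq_some_false fun _ => t.blocks_pos).2 h1
    rw [htw, List.head?_append] at this
    cases hw : w.head? <;> simp_all
  have hlastw : w.getLast? = some true ↔ b = 1 := by
    rcases Nat.lt_or_ge b 2 with hb | hb
    · obtain rfl : b = 1 := by
        have := t.blocks_pos (by simp [hrb] : b ∈ t.blocks)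
        omega
      simp [w, getLast?_encodeWord hr]
    · simp [w, List.getLast?_append, List.getLast?_replicate, show b - 1 ≠ 0 by omega,
        show b ≠ 1 by omega]
  have := card_admissibleErasures_append_true hw
  rw [← htw, count_encodeWord, Composition.blocks_length] at this
  simpa only [hrb, List.getLastD_concat, ← hlastw] using this

theorem card_admissibleErasures_encodeWord {n : ℕ} (t : Composition n) (hlen : 2 ≤ t.length) :
    (#(admissibleErasures (encodeWord t.blocks)) : ℤ) =
      (if t.blocks.headI = 1 ∧ 2 ≤ t.blocks.tail.headI then 1 else 0)
        + t.length * (if 2 ≤ t.blocks.headI ∧ t.blocks.getLastD 0 = 1 then 1 else 0)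
        + (t.length - 1) *
          (if 2 ≤ t.blocks.headI ∧ 2 ≤ t.blocks.getLastD 0 then 1 else 0) := by
  have hne : t.blocks ≠ [] := List.ne_nil_of_length_pos (by rw [t.blocks_length]; omega)
  have hhead : 1 ≤ t.blocks.headI := by
    obtain ⟨a, r, har⟩ := List.exists_cons_of_ne_nil hne
    rw [har]
    exact t.blocks_pos (show a ∈ t.blocks by simp [har])
  have hlast : 1 ≤ t.blocks.getLastD 0 := by
    rw [List.getLastD_eq_getLast?, List.getLast?_eq_some_getLast hne]
    exact t.blocks_pos (List.getLast_mem hne)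
  have hE1 := card_admissibleErasures_encodeWord_of_headI_eq_one t
  have hE2 := fun h => card_admissibleErasures_encodeWord_add t h hlen
  split_ifs at hE1 hE2 ⊢ <;> omega

theorem Composition.insertOne_eq_iff {m : ℕ} {c : Composition m} {j : ℕ} (hj : j ≤ m)
    {t : Composition (m + 1)} :
    c.insertOne j = t ↔ (encodeWord t.blocks)[j]? = some true ∧
      (encodeWord t.blocks).eraseIdx j = encodeWord c.blocks := by
  constructor
  · rintro rfl
    rw [encodeWord_insertOne_blocks c hj, List.getElem?_insertIdx_self, if_pos,
      List.eraseIdx_insertIdx_self]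
    · exact ⟨rfl, rfl⟩
    · rwa [length_encodeWord fun _ => c.blocks_pos, c.blocks_sum]
  · rintro ⟨h1, h2⟩
    obtain ⟨hj', hget⟩ := List.getElem?_eq_some_iff.1 h1
    refine Composition.ext (encodeWord_injOn (fun _ => (c.insertOne j).blocks_pos)
      (fun _ => t.blocks_pos) ?_)
    rw [encodeWord_insertOne_blocks c hj, ← h2, ← hget, List.insertIdx_eraseIdx_getElem hj']

theorem exists_composition_encodeWord_eq {m : ℕ} {w : List Bool} (hlen : w.length = m)
    (hw : w.getLast? = some true) : ∃ c : Composition m, encodeWord c.blocks = w := by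
  obtain ⟨v, rfl⟩ := List.getLast?_eq_some_iff.1 hw
  obtain ⟨s, hs, hsv⟩ := exists_encodeWord_eq_append_true v
  exact ⟨⟨s, hs _, by rw [← length_encodeWord hs, hsv, hlen]⟩, hsv⟩

theorem card_fiber_insertOne {m ℓ : ℕ} (t : Composition (m + 1)) (ht : t.length = ℓ + 1) :
    #{p ∈ (univ.filter fun c : Composition m => c.length = ℓ ∧ 2 ≤ c.blocks.headI) ×ˢ
        range (m + 1) | p.1.insertOne p.2 = t} =
      #(admissibleErasures (encodeWord t.blocks)) := by
  have hlen : (encodeWord t.blocks).length = m + 1 := by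
    rw [length_encodeWord fun _ => t.blocks_pos, t.blocks_sum]
  apply card_bij (fun p _ => p.2)
  · rintro ⟨c, j⟩ hp
    simp only [mem_filter, mem_product, mem_univ, true_and, mem_range] at hp
    obtain ⟨⟨⟨-, hc2⟩, hj⟩, hct⟩ := hp
    obtain ⟨h1, h2⟩ := (Composition.insertOne_eq_iff (by omega)).1 hct
    rw [mem_admissibleErasures, h2, isAdmissibleWord_encodeWord_iff fun _ => c.blocks_pos]
    exact ⟨h1, hc2⟩
  · rintro ⟨c, j⟩ hp ⟨c', j'⟩ hp' (rfl : j = j')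
    simp only [mem_filter, mem_product, mem_univ, true_and, mem_range] at hp hp'
    have h := ((Composition.insertOne_eq_iff (by omega)).1 hp.2).2
    rw [((Composition.insertOne_eq_iff (by omega)).1 hp'.2).2] at h
    rw [Composition.ext (encodeWord_injOn (fun _ => c'.blocks_pos) (fun _ => c.blocks_pos) h)]
  · intro j hj
    obtain ⟨h1, hadm⟩ := mem_admissibleErasures.1 hj
    have hj : j < m + 1 := hlen ▸ (List.getElem?_eq_some_iff.1 h1).1
    obtain ⟨c, hc⟩ := exists_composition_encodeWord_eq (m := m)
      (by rw [List.length_eraseIdx_of_lt (by omega), hlen]; rfl) hadm.2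
    refine ⟨(c, j), ?_, rfl⟩
    have hcount := count_eraseIdx_add_one h1
    rw [← hc, count_encodeWord, count_encodeWord, Composition.blocks_length,
      Composition.blocks_length] at hcount
    rw [← hc, isAdmissibleWord_encodeWord_iff fun _ => c.blocks_pos] at hadm
    simp only [mem_filter, mem_product, mem_univ, true_and, mem_range]
    exact ⟨⟨⟨by omega, hadm⟩, hj⟩,
      (Composition.insertOne_eq_iff (by omega)).2 ⟨h1, hc.symm⟩⟩

theorem sum_sum_zw_insertOne (k m : ℕ) (hk : 2 ≤ k) :
    ∑ c ∈ univ.filter (fun c : Composition m => c.length = k - 1 ∧ 2 ≤ c.blocks.headI),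
        ∑ j ∈ range (m + 1), zw (c.insertOne j).blocks
      = (∑ c ∈ univ.filter (fun c : Composition (m + 1) =>
            c.length = k ∧ c.blocks.headI = 1 ∧ 2 ≤ c.blocks.tail.headI), zw c.blocks)
        + (k : ℤ) • (∑ c ∈ univ.filter (fun c : Composition (m + 1) =>
            c.length = k ∧ 2 ≤ c.blocks.headI ∧ c.blocks.getLastD 0 = 1), zw c.blocks)
        + ((k : ℤ) - 1) • (∑ c ∈ univ.filter (fun c : Composition (m + 1) =>
            c.length = k ∧ 2 ≤ c.blocks.headI ∧ 2 ≤ c.blocks.getLastD 0), zw c.blocks) := by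
  rw [← sum_product', ← sum_fiberwise_of_maps_to (t := univ)
    (g := fun p : Composition m × ℕ => p.1.insertOne p.2) fun _ _ => mem_univ _,
    sum_congr rfl fun t _ => sum_eq_card_nsmul fun p hp => by rw [(mem_filter.1 hp).2]]
  simp only [sum_filter, Finset.smul_sum, ← sum_add_distrib]
  refine sum_congr rfl fun t _ => ?_
  by_cases ht : t.length = k
  · rw [card_fiber_insertOne t (by omega : t.length = k - 1 + 1), ← natCast_zsmul,
      card_admissibleErasures_encodeWord t (by omega)]
    simp only [ht, true_and, add_smul, mul_smul]
    split_ifs <;> simp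
  · rw [card_eq_zero.2 (filter_eq_empty_iff.2 fun p hp hpt => ht ?_)]
    · simp [ht]
    · simp only [mem_product, mem_filter, mem_univ, true_and] at hp
      rw [← hpt, Composition.length_insertOne, hp.1.1]
      omega

end

/-- For `k ≥ 2`, `n ≥ k`:
`z₁ ш (∑_{s₁≥2, s₁+⋯+s_{k-1}=n-1} z_{s₁,…,s_{k-1}})
  = ∑_{t₁=1, t₂≥2, ∑tᵢ=n} z_{t₁,…,t_k} + k ∑_{t₁≥2, t_k=1, ∑tᵢ=n} z_{t₁,…,t_k}
    + (k-1) ∑_{t₁≥2, t_k≥2, ∑tᵢ=n} z_{t₁,…,t_k}`. -/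
theorem shuffle_z1_sum_admissible
    (sh : XWords →ₗ[ℤ] XWords →ₗ[ℤ] XWords)
    (hsunitl : ∀ w : XWords, sh (xw []) w = w)
    (hsunitr : ∀ w : XWords, sh w (xw []) = w)
    (hsrec : ∀ (a b : Bool) (u v : List Bool),
      sh (xw (a :: u)) (xw (b :: v)) =
        Finsupp.mapDomain (List.cons a) (sh (xw u) (xw (b :: v))) +
          Finsupp.mapDomain (List.cons b) (sh (xw (a :: u)) (xw v)))
    (msh : QWords →ₗ[ℤ] QWords →ₗ[ℤ] QWords)
    (hsupp : ∀ u v : List ℕ, (∀ x ∈ u, 1 ≤ x) → (∀ x ∈ v, 1 ≤ x) →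
      ∀ l ∈ (msh (zw u) (zw v)).support, ∀ x ∈ l, 1 ≤ x)
    (hcompat : ∀ u v : List ℕ, (∀ x ∈ u, 1 ≤ x) → (∀ x ∈ v, 1 ≤ x) →
      Finsupp.mapDomain encodeWord (msh (zw u) (zw v)) =
        sh (xw (encodeWord u)) (xw (encodeWord v)))
    (k n : ℕ) (hk : 2 ≤ k) (hn : k ≤ n) :
    msh (zw [1])
        (∑ c ∈ Finset.univ.filter
          (fun c : Composition (n - 1) => c.length = k - 1 ∧ 2 ≤ c.blocks.headI),
          zw c.blocks)
      = (∑ c ∈ Finset.univ.filter (fun c : Composition n =>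
            c.length = k ∧ c.blocks.headI = 1 ∧ 2 ≤ c.blocks.tail.headI), zw c.blocks)
        + (k : ℤ) • (∑ c ∈ Finset.univ.filter (fun c : Composition n =>
            c.length = k ∧ 2 ≤ c.blocks.headI ∧ c.blocks.getLastD 0 = 1), zw c.blocks)
        + ((k : ℤ) - 1) • (∑ c ∈ Finset.univ.filter (fun c : Composition n =>
            c.length = k ∧ 2 ≤ c.blocks.headI ∧ 2 ≤ c.blocks.getLastD 0),
            zw c.blocks) := by
  obtain ⟨m, rfl⟩ : ∃ m, n = m + 1 := ⟨n - 1, by omega⟩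
  simp only [map_sum, msh_zw_one_composition sh msh hsupp hcompat
    (shuffle_singleton_left sh hsunitl hsunitr hsrec true)]
  exact sum_sum_zw_insertOne k m hk
end

section
/- In the shuffle algebra (via Euler's decomposition formula), for n ≥ 3: ∑_{r ≥ 1, s ≥ 2, r + s = n} z_r ш z_s = ∑_{t1=1}^{n-1} (2^{t1} − 1) z_{t1, n−t1} − z_{n−1, 1}, where ш is the transported shuffle product and z_{a,b} corresponds to x0^{a-1} x1 x0^{b-1} x1. -/
open Finsupp

/-!
Euler's decomposition of `z_{a+1} ш z_{b+1}` is proved in the letters `x₀, x₁` by a double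
induction on `a, b`: the Euler sum obeys the same recursion as the shuffle product. It is carried
back to `z`-words through `decodeWord`, a left inverse of `encodeWord` on words with positive
indices. Summed over `a + b = m`, the coefficient of `z_{t+1, m-t+1}` is
`∑_{a+b=m} (C(t,a) + C(t,b)) = 2^{t+1}`. The sum in the theorem is this full sum minus the term
`z_{m+1} ш z_1`, whose decomposition contributes `1` to every coefficient and an extra `z_{m+1,1}`.
-/

open Finset

structure IsShuffleProduct (sh : XWords →ₗ[ℤ] XWords →ₗ[ℤ] XWords) : Prop where
  nil_left : ∀ w : XWords, sh (xw []) w = w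
  nil_right : ∀ w : XWords, sh w (xw []) = w
  cons_cons : ∀ (a b : Bool) (u v : List Bool),
    sh (xw (a :: u)) (xw (b :: v)) =
      mapDomain (List.cons a) (sh (xw u) (xw (b :: v))) +
        mapDomain (List.cons b) (sh (xw (a :: u)) (xw v))

@[simp]
lemma encodeWord_succ_succ_cons (s : ℕ) (l : List ℕ) :
    encodeWord ((s + 2) :: l) = false :: encodeWord ((s + 1) :: l) := by
  simp [encodeWord, List.replicate_succ]

@[simp]
lemma mapDomain_cons_xw (c : Bool) (w : List Bool) :
    mapDomain (List.cons c) (xw w) = xw (c :: w) :=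
  mapDomain_single

lemma mapDomain_cons_sum_smul_xw {ι : Type*} (c : Bool) (s : Finset ι) (k : ι → ℤ)
    (w : ι → List Bool) :
    mapDomain (List.cons c) (∑ i ∈ s, k i • xw (w i)) = ∑ i ∈ s, k i • xw (c :: w i) := by
  simp [mapDomain_finsetSum, mapDomain_smul]

/-- The right-hand side of Euler's decomposition of `z_{a+1} ш z_{b+1}`, written in `x₀, x₁`. -/
noncomputable def eulerSum (a b : ℕ) : XWords :=
  ∑ t ∈ range (a + b + 1),
    ((t.choose a + t.choose b : ℕ) : ℤ) • xw (encodeWord [t + 1, a + b - t + 1])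

lemma eulerSum_comm (a b : ℕ) : eulerSum a b = eulerSum b a := by
  simp only [eulerSum, add_comm a b, Nat.add_comm (Nat.choose _ a)]

lemma eulerSum_zero_zero :
    eulerSum 0 0 = xw (true :: encodeWord [1]) + xw (true :: encodeWord [1]) := by
  simp [eulerSum, ← two_smul ℤ, encodeWord]

lemma eulerSum_zero_succ (b : ℕ) :
    eulerSum 0 (b + 1) =
      xw (true :: encodeWord [b + 2]) + mapDomain (List.cons false) (eulerSum 0 b) := by
  rw [eulerSum, eulerSum, mapDomain_cons_sum_smul_xw, sum_range_succ', add_comm]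
  congr 1
  · simp [encodeWord]
  · refine sum_congr (by simp) fun t ht => ?_
    have htb : t < b + 1 := by simpa using ht
    simp [Nat.choose_succ_succ, Nat.choose_eq_zero_of_lt htb]

lemma eulerSum_succ_succ (a b : ℕ) :
    eulerSum (a + 1) (b + 1) = mapDomain (List.cons false) (eulerSum a (b + 1)) +
      mapDomain (List.cons false) (eulerSum (a + 1) b) := by
  rw [eulerSum, eulerSum, eulerSum, mapDomain_cons_sum_smul_xw, mapDomain_cons_sum_smul_xw,
    sum_range_succ']
  simp only [Nat.choose_zero_succ, add_zero, Nat.cast_zero, zero_smul]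
  rw [show a + (b + 1) + 1 = a + 1 + (b + 1) by ring, show a + 1 + b + 1 = a + 1 + (b + 1) by ring,
    ← sum_add_distrib]
  refine sum_congr rfl fun t _ => ?_
  rw [show a + 1 + b = a + (b + 1) by ring, ← add_smul, encodeWord_succ_succ_cons,
    show a + 1 + (b + 1) - (t + 1) = a + (b + 1) - t by omega]
  congr 1
  push_cast [Nat.choose_succ_succ]
  ring

lemma IsShuffleProduct.encodeWord_singleton_eq_eulerSum {sh : XWords →ₗ[ℤ] XWords →ₗ[ℤ] XWords}
    (hsh : IsShuffleProduct sh) (a b : ℕ) :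
    sh (xw (encodeWord [a + 1])) (xw (encodeWord [b + 1])) = eulerSum a b := by
  have h1 : encodeWord [1] = true :: [] := rfl
  induction a generalizing b with
  | zero =>
    induction b with
    | zero => rw [eulerSum_zero_zero, h1, hsh.cons_cons, hsh.nil_left, hsh.nil_right,
        mapDomain_cons_xw, ← h1]
    | succ b ihb => rw [eulerSum_zero_succ, ← ihb, encodeWord_succ_succ_cons, h1, hsh.cons_cons,
        hsh.nil_left, mapDomain_cons_xw, ← h1, ← encodeWord_succ_succ_cons]
  | succ a iha =>
    induction b with
    | zero => rw [eulerSum_comm, eulerSum_zero_succ, eulerSum_comm, ← iha,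
        encodeWord_succ_succ_cons, h1, hsh.cons_cons, hsh.nil_right, mapDomain_cons_xw, ← h1,
        ← encodeWord_succ_succ_cons, add_comm]
    | succ b ihb => rw [eulerSum_succ_succ, ← iha, ← ihb, encodeWord_succ_succ_cons,
        encodeWord_succ_succ_cons, hsh.cons_cons, ← encodeWord_succ_succ_cons]

def decodeWord : List Bool → List ℕ
  | [] => []
  | true :: w => 1 :: decodeWord w
  | false :: w => match decodeWord w with
    | [] => []
    | a :: t => (a + 1) :: t

lemma decodeWord_replicate_false_append (k : ℕ) (w : List Bool) :
    decodeWord (List.replicate k false ++ true :: w) = (k + 1) :: decodeWord w := by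
  induction k with
  | zero => rfl
  | succ k ih => simp [List.replicate_succ, decodeWord, ih]

lemma decodeWord_encodeWord {l : List ℕ} (hl : ∀ x ∈ l, 1 ≤ x) :
    decodeWord (encodeWord l) = l := by
  induction l with
  | nil => rfl
  | cons s t ih =>
    rw [encodeWord, decodeWord_replicate_false_append, ih fun x hx => hl x (by simp [hx]),
      Nat.sub_add_cancel (hl s (by simp))]

lemma mapDomain_decodeWord_encodeWord {f : QWords} (hf : ∀ l ∈ f.support, ∀ x ∈ l, 1 ≤ x) :
    mapDomain decodeWord (mapDomain encodeWord f) = f := by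
  rw [← mapDomain_comp]
  exact (mapDomain_congr fun l hl => decodeWord_encodeWord (hf l hl)).trans mapDomain_id

lemma mapDomain_decodeWord_eulerSum (a b : ℕ) :
    mapDomain decodeWord (eulerSum a b) =
      ∑ t ∈ range (a + b + 1), ((t.choose a + t.choose b : ℕ) : ℤ) • zw [t + 1, a + b - t + 1] := by
  simp only [eulerSum, mapDomain_finsetSum, mapDomain_smul, xw, zw, mapDomain_single]
  refine sum_congr rfl fun t _ => ?_
  rw [decodeWord_encodeWord (by simp)]

lemma sum_range_choose_of_le {t m : ℕ} (h : t ≤ m) :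
    ∑ k ∈ range (m + 1), t.choose k = 2 ^ t := by
  rw [← Nat.sum_range_choose t]
  exact (sum_subset (range_subset_range.2 (by omega)) fun k _ hk =>
    Nat.choose_eq_zero_of_lt (by simpa using hk)).symm

lemma sum_antidiagonal_choose_add_choose {t m : ℕ} (h : t ≤ m) :
    ∑ p ∈ antidiagonal m, (t.choose p.1 + t.choose p.2) = 2 ^ (t + 1) := by
  rw [sum_add_distrib, ← Nat.sum_antidiagonal_swap (f := fun p => t.choose p.2)]
  simp only [Prod.snd_swap]
  rw [Nat.sum_antidiagonal_eq_sum_range_succ_mk, sum_range_choose_of_le h, pow_succ, mul_two]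

lemma sum_filter_antidiagonal_add_three {M : Type*} [AddCommMonoid M] (f : ℕ × ℕ → M) (m : ℕ) :
    ∑ p ∈ (antidiagonal (m + 3)).filter (fun p => 1 ≤ p.1 ∧ 2 ≤ p.2), f p =
      ∑ p ∈ antidiagonal m, f (p.1 + 1, p.2 + 1 + 1) := by
  symm
  refine sum_nbij' (fun p => (p.1 + 1, p.2 + 2)) (fun p => (p.1 - 1, p.2 - 2)) ?_ ?_ ?_ ?_
    fun _ _ => rfl
  all_goals
    intro p
    simp only [HasAntidiagonal.mem_antidiagonal, mem_filter, Prod.ext_iff]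
    omega

structure IsTransportedShuffle (sh : XWords →ₗ[ℤ] XWords →ₗ[ℤ] XWords)
    (msh : QWords →ₗ[ℤ] QWords →ₗ[ℤ] QWords) : Prop where
  support_pos : ∀ u v : List ℕ, (∀ x ∈ u, 1 ≤ x) → (∀ x ∈ v, 1 ≤ x) →
    ∀ l ∈ (msh (zw u) (zw v)).support, ∀ x ∈ l, 1 ≤ x
  mapDomain_encodeWord : ∀ u v : List ℕ, (∀ x ∈ u, 1 ≤ x) → (∀ x ∈ v, 1 ≤ x) →
    mapDomain encodeWord (msh (zw u) (zw v)) = sh (xw (encodeWord u)) (xw (encodeWord v))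

namespace IsTransportedShuffle

variable {sh : XWords →ₗ[ℤ] XWords →ₗ[ℤ] XWords} {msh : QWords →ₗ[ℤ] QWords →ₗ[ℤ] QWords}

lemma euler_decomposition (hmsh : IsTransportedShuffle sh msh) (hsh : IsShuffleProduct sh)
    (a b : ℕ) :
    msh (zw [a + 1]) (zw [b + 1]) =
      ∑ t ∈ range (a + b + 1), ((t.choose a + t.choose b : ℕ) : ℤ) • zw [t + 1, a + b - t + 1] := by
  have hpos : ∀ k : ℕ, ∀ x ∈ [k + 1], 1 ≤ x := by simp
  rw [← mapDomain_decodeWord_eulerSum, ← hsh.encodeWord_singleton_eq_eulerSum,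
    ← hmsh.mapDomain_encodeWord _ _ (hpos a) (hpos b),
    mapDomain_decodeWord_encodeWord (hmsh.support_pos _ _ (hpos a) (hpos b))]

lemma sum_antidiagonal_euler_decomposition (hmsh : IsTransportedShuffle sh msh)
    (hsh : IsShuffleProduct sh) (m : ℕ) :
    ∑ p ∈ antidiagonal m, msh (zw [p.1 + 1]) (zw [p.2 + 1]) =
      ∑ t ∈ range (m + 1), (2 : ℤ) ^ (t + 1) • zw [t + 1, m - t + 1] := by
  calc ∑ p ∈ antidiagonal m, msh (zw [p.1 + 1]) (zw [p.2 + 1])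
      = ∑ p ∈ antidiagonal m, ∑ t ∈ range (m + 1),
          ((t.choose p.1 + t.choose p.2 : ℕ) : ℤ) • zw [t + 1, m - t + 1] :=
        sum_congr rfl fun p hp => by
          rw [hmsh.euler_decomposition hsh, HasAntidiagonal.mem_antidiagonal.1 hp]
    _ = ∑ t ∈ range (m + 1), (2 : ℤ) ^ (t + 1) • zw [t + 1, m - t + 1] := by
        rw [Finset.sum_comm]
        refine sum_congr rfl fun t ht => ?_
        rw [← sum_smul, ← Nat.cast_sum,
          sum_antidiagonal_choose_add_choose (Nat.lt_succ_iff.1 (mem_range.1 ht))]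
        push_cast
        rfl

lemma euler_decomposition_right_one (hmsh : IsTransportedShuffle sh msh)
    (hsh : IsShuffleProduct sh) (m : ℕ) :
    msh (zw [m + 1]) (zw [1]) = ∑ t ∈ range (m + 1), zw [t + 1, m - t + 1] + zw [m + 1, 1] := by
  have hlast :
      ∑ t ∈ range (m + 1), ((t.choose m : ℕ) : ℤ) • zw [t + 1, m - t + 1] = zw [m + 1, 1] := by
    rw [sum_range_succ,
      sum_eq_zero fun t ht => by rw [Nat.choose_eq_zero_of_lt (mem_range.1 ht)]; simp]
    simp
  rw [hmsh.euler_decomposition hsh m 0, add_zero, ← hlast, ← sum_add_distrib]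
  refine sum_congr rfl fun t _ => ?_
  rw [Nat.choose_zero_right, Nat.cast_add, Nat.cast_one, add_smul, one_smul, add_comm]

end IsTransportedShuffle

/-- For `n ≥ 3`:
`∑_{r ≥ 1, s ≥ 2, r+s=n} z_r ш z_s = ∑_{t₁=1}^{n-1} (2^{t₁} − 1) z_{t₁, n−t₁} − z_{n−1,1}`. -/
theorem shuffle_sum_depth_two_admissible
    (sh : XWords →ₗ[ℤ] XWords →ₗ[ℤ] XWords)
    (hsunitl : ∀ w : XWords, sh (xw []) w = w)
    (hsunitr : ∀ w : XWords, sh w (xw []) = w)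
    (hsrec : ∀ (a b : Bool) (u v : List Bool),
      sh (xw (a :: u)) (xw (b :: v)) =
        Finsupp.mapDomain (List.cons a) (sh (xw u) (xw (b :: v))) +
          Finsupp.mapDomain (List.cons b) (sh (xw (a :: u)) (xw v)))
    (msh : QWords →ₗ[ℤ] QWords →ₗ[ℤ] QWords)
    (hsupp : ∀ u v : List ℕ, (∀ x ∈ u, 1 ≤ x) → (∀ x ∈ v, 1 ≤ x) →
      ∀ l ∈ (msh (zw u) (zw v)).support, ∀ x ∈ l, 1 ≤ x)
    (hcompat : ∀ u v : List ℕ, (∀ x ∈ u, 1 ≤ x) → (∀ x ∈ v, 1 ≤ x) →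
      Finsupp.mapDomain encodeWord (msh (zw u) (zw v)) =
        sh (xw (encodeWord u)) (xw (encodeWord v)))
    (n : ℕ) (hn : 3 ≤ n) :
    ∑ p ∈ (Finset.HasAntidiagonal.antidiagonal n).filter (fun p => 1 ≤ p.1 ∧ 2 ≤ p.2),
        msh (zw [p.1]) (zw [p.2])
      = (∑ t₁ ∈ Finset.Icc 1 (n - 1), ((2 : ℤ) ^ t₁ - 1) • zw [t₁, n - t₁])
          - zw [n - 1, 1] := by
  have hsh : IsShuffleProduct sh := ⟨hsunitl, hsunitr, hsrec⟩
  have hmsh : IsTransportedShuffle sh msh := ⟨hsupp, hcompat⟩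
  obtain ⟨m, rfl⟩ : ∃ m, n = m + 3 := ⟨n - 3, by omega⟩
  have hsplit : ∑ p ∈ antidiagonal m, msh (zw [p.1 + 1]) (zw [p.2 + 1 + 1]) =
      ∑ p ∈ antidiagonal (m + 1), msh (zw [p.1 + 1]) (zw [p.2 + 1]) -
        msh (zw [m + 1 + 1]) (zw [1]) :=
    eq_sub_of_add_eq'
      (Nat.sum_antidiagonal_succ' (f := fun p => msh (zw [p.1 + 1]) (zw [p.2 + 1]))).symm
  rw [sum_filter_antidiagonal_add_three (fun p => msh (zw [p.1]) (zw [p.2])), hsplit,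
    hmsh.sum_antidiagonal_euler_decomposition hsh, hmsh.euler_decomposition_right_one hsh,
    ← Ico_add_one_right_eq_Icc, sum_Ico_eq_sum_range, sub_add_eq_sub_sub, ← sum_sub_distrib]
  congr 1
  refine sum_congr (by simp) fun t ht => ?_
  rw [sub_smul, one_smul, add_comm 1 t, show m + 3 - (t + 1) = m + 1 - t + 1 by simp at ht; omega]
end

section
/- In the quasi-shuffle algebra, for positive integers k ≥ 3 and n ≥ k, and any fixed s1 ≥ 1: ∑_{r, s2,...,s_{k-1} ≥ 1, r + s2 + ... + s_{k-1} = n − s1} z_{s1}(z_r * z_{s2,...,s_{k-1}}) = (k−1) ∑_{ti ≥ 1, s1 + t1 + ... + t_{k-1} = n fixed s1} z_{s1, t1,...,t_{k-1}} + (n − s1 − k + 2) ∑_{ui ≥ 1, u1 + ... + u_{k-2} = n − s1} z_{s1, u1,...,u_{k-2}}, provided n − s1 ≥ k − 1. -/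
open Finsupp

/-- Prepending the letter `z_r`, as a linear operator. -/
noncomputable def zcons (r : ℕ) : QWords →ₗ[ℤ] QWords :=
  Finsupp.lmapDomain ℤ ℤ (List.cons r)

/-!
Write `S(m, d)` for the sum of all words `z_l` with positive letters, weight `m` and depth `d`.
The left-hand side is `z_{s₁}` applied to `∑_{r=1}^{m} z_r * S(m - r, d)` with `m = n - s₁`,
`d = k - 2`, and this sum equals `(d + 1) S(m, d + 1) + (m - d) S(m, d)` for all `m` and `d`.
For the induction on `d`, write `S(m - r, d + 1) = ∑_s z_s S(m - r - s, d)` and expand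
`z_r * z_s w` by the recursion: the terms `z_r z_s w` add up to `S(m, d + 2)`, the terms
`z_s (z_r * w)` are covered by the induction hypothesis, and each merged letter `z_t`, `t = r + s`,
occurs `t - 1` times, which turns the correction term `(m - t - d)` of the induction hypothesis
into the constant `m - d - 1`.
-/

open Finset

lemma zcons_zw (r : ℕ) (l : List ℕ) : zcons r (zw l) = zw (r :: l) := by simp [zcons, zw]

lemma sum_Icc_sum_Icc_sub_comm {M : Type*} [AddCommMonoid M] (m : ℕ) (f : ℕ → ℕ → M) :
    ∑ r ∈ Icc 1 m, ∑ s ∈ Icc 1 (m - r), f r s =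
      ∑ s ∈ Icc 1 m, ∑ r ∈ Icc 1 (m - s), f r s :=
  sum_comm' fun r s => by simp only [mem_Icc]; omega

lemma sum_Icc_sum_Icc_sub_add {M : Type*} [AddCommMonoid M] (m : ℕ) (g : ℕ → M) :
    ∑ r ∈ Icc 1 m, ∑ s ∈ Icc 1 (m - r), g (r + s) = ∑ t ∈ Icc 1 m, (t - 1) • g t := by
  have shift : ∀ r ∈ Icc 1 m, ∑ s ∈ Icc 1 (m - r), g (r + s) = ∑ t ∈ Ioc r m, g t := by
    intro r hr
    rw [mem_Icc] at hr
    exact sum_nbij' (r + ·) (· - r) (by intro s; simp only [mem_Icc, mem_Ioc]; omega)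
      (by intro s; simp only [mem_Icc, mem_Ioc]; omega) (by intro s; simp only [mem_Icc]; omega)
      (by intro s; simp only [mem_Ioc]; omega) (fun _ _ => rfl)
  calc ∑ r ∈ Icc 1 m, ∑ s ∈ Icc 1 (m - r), g (r + s)
      = ∑ r ∈ Icc 1 m, ∑ t ∈ Ioc r m, g t := sum_congr rfl shift
    _ = ∑ t ∈ Icc 1 m, ∑ _r ∈ Ico 1 t, g t :=
        sum_comm' fun r t => by simp only [mem_Icc, mem_Ioc, mem_Ico]; omega
    _ = ∑ t ∈ Icc 1 m, (t - 1) • g t := by simp only [sum_const, Nat.card_Ico]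

def compositionWords (m d : ℕ) : Finset (List ℕ) :=
  ((univ : Finset (Composition m)).filter (·.length = d)).image Composition.blocks

lemma mem_compositionWords {m d : ℕ} {l : List ℕ} :
    l ∈ compositionWords m d ↔ (∀ x ∈ l, 0 < x) ∧ l.sum = m ∧ l.length = d := by
  constructor
  · simp only [compositionWords, mem_image, mem_filter, mem_univ, true_and]
    rintro ⟨c, rfl, rfl⟩
    exact ⟨fun _ => c.blocks_pos, c.blocks_sum, rfl⟩
  · rintro ⟨hpos, hsum, rfl⟩
    simp only [compositionWords, mem_image, mem_filter, mem_univ, true_and]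
    exact ⟨⟨l, hpos _, hsum⟩, rfl, rfl⟩

lemma sum_filter_length_eq_sum_compositionWords {M : Type*} [AddCommMonoid M] (m d : ℕ)
    (f : List ℕ → M) :
    ∑ c ∈ univ.filter (fun c : Composition m => c.length = d), f c.blocks =
      ∑ l ∈ compositionWords m d, f l :=
  (sum_image fun _ _ _ _ h => Composition.ext h).symm

lemma compositionWords_zero_right (m : ℕ) :
    compositionWords m 0 = if m = 0 then {[]} else ∅ := by
  ext l
  split_ifs with hm
  · subst hm
    simp only [mem_compositionWords, mem_singleton]
    constructor
    · exact fun h => List.length_eq_zero_iff.mp h.2.2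
    · rintro rfl
      simp
  · simp only [mem_compositionWords, List.length_eq_zero_iff, notMem_empty, iff_false]
    rintro ⟨-, rfl, rfl⟩
    exact hm rfl

lemma sum_compositionWords_succ {M : Type*} [AddCommMonoid M] (m d : ℕ) (f : List ℕ → M) :
    ∑ l ∈ compositionWords m (d + 1), f l =
      ∑ r ∈ Icc 1 m, ∑ l ∈ compositionWords (m - r) d, f (r :: l) := by
  rw [sum_sigma']
  refine sum_nbij' (fun l => ⟨l.headI, l.tail⟩) (fun p => p.1 :: p.2) ?_ ?_ ?_ ?_ ?_
  · rintro (_ | ⟨r, l⟩) hl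
    · simp [mem_compositionWords] at hl
    · simp only [mem_compositionWords, List.mem_cons, forall_eq_or_imp, List.sum_cons,
        List.length_cons] at hl
      obtain ⟨⟨hr, hpos⟩, hsum, hlen⟩ := hl
      simp only [mem_sigma, mem_Icc, mem_compositionWords, List.headI_cons, List.tail_cons]
      exact ⟨⟨hr, by omega⟩, hpos, by omega, by omega⟩
  · rintro ⟨r, l⟩ h
    obtain ⟨⟨hr, hrm⟩, hpos, hsum, hlen⟩ := by
      simpa only [mem_sigma, mem_Icc, mem_compositionWords] using h
    simp only [mem_compositionWords, List.mem_cons, forall_eq_or_imp, List.sum_cons,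
      List.length_cons]
    exact ⟨⟨hr, hpos⟩, by omega, by omega⟩
  · rintro (_ | ⟨r, l⟩) hl
    · simp [mem_compositionWords] at hl
    · rfl
  · rintro ⟨r, l⟩ _
    rfl
  · rintro (_ | ⟨r, l⟩) hl
    · simp [mem_compositionWords] at hl
    · rfl

noncomputable def weightDepthSum (m d : ℕ) : QWords := ∑ l ∈ compositionWords m d, zw l

lemma weightDepthSum_zero_right (m : ℕ) : weightDepthSum m 0 = if m = 0 then zw [] else 0 := by
  rw [weightDepthSum, compositionWords_zero_right]
  split_ifs <;> simp

lemma weightDepthSum_succ (m d : ℕ) :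
    weightDepthSum m (d + 1) = ∑ r ∈ Icc 1 m, zcons r (weightDepthSum (m - r) d) := by
  simp only [weightDepthSum, sum_compositionWords_succ, map_sum, zcons_zw]

structure IsQuasiShuffleMul (mul : QWords →ₗ[ℤ] QWords →ₗ[ℤ] QWords) : Prop where
  one_mul : ∀ w : QWords, mul (zw []) w = w
  mul_one : ∀ w : QWords, mul w (zw []) = w
  cons_mul_cons : ∀ (r s : ℕ) (u v : List ℕ), 1 ≤ r → 1 ≤ s →
    (∀ x ∈ u, 1 ≤ x) → (∀ x ∈ v, 1 ≤ x) →
    mul (zw (r :: u)) (zw (s :: v)) =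
      zcons r (mul (zw u) (zw (s :: v))) + zcons s (mul (zw (r :: u)) (zw v)) +
        zcons (r + s) (mul (zw u) (zw v))

namespace IsQuasiShuffleMul

variable {mul : QWords →ₗ[ℤ] QWords →ₗ[ℤ] QWords}

lemma single_mul_weightDepthSum_zero (hmul : IsQuasiShuffleMul mul) (r j : ℕ) :
    mul (zw [r]) (weightDepthSum j 0) = zcons r (weightDepthSum j 0) := by
  rw [weightDepthSum_zero_right]
  split_ifs
  · rw [hmul.mul_one, zcons_zw]
  · simp

lemma single_mul_zcons_weightDepthSum (hmul : IsQuasiShuffleMul mul) {r s : ℕ} (hr : 1 ≤ r)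
    (hs : 1 ≤ s) (j d : ℕ) :
    mul (zw [r]) (zcons s (weightDepthSum j d)) =
      zcons r (zcons s (weightDepthSum j d)) + zcons s (mul (zw [r]) (weightDepthSum j d)) +
        zcons (r + s) (weightDepthSum j d) := by
  simp only [weightDepthSum, map_sum, zcons_zw, ← sum_add_distrib]
  refine sum_congr rfl fun l hl => ?_
  have hpos : ∀ x ∈ l, 1 ≤ x := (mem_compositionWords.mp hl).1
  rw [hmul.cons_mul_cons r s [] l hr hs (by simp) hpos, hmul.one_mul, hmul.one_mul, zcons_zw,
    zcons_zw]

theorem sum_single_mul_weightDepthSum (hmul : IsQuasiShuffleMul mul) (d m : ℕ) :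
    ∑ r ∈ Icc 1 m, mul (zw [r]) (weightDepthSum (m - r) d) =
      ((d : ℤ) + 1) • weightDepthSum m (d + 1) + ((m : ℤ) - d) • weightDepthSum m d := by
  induction d generalizing m with
  | zero =>
    rw [sum_congr rfl fun r _ => hmul.single_mul_weightDepthSum_zero r (m - r),
      ← weightDepthSum_succ, weightDepthSum_zero_right]
    split_ifs with hm <;> simp [hm]
  | succ d ih =>
    have expand : ∀ r ∈ Icc 1 m, mul (zw [r]) (weightDepthSum (m - r) (d + 1)) =
        ∑ s ∈ Icc 1 (m - r), (zcons r (zcons s (weightDepthSum (m - r - s) d)) +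
          zcons s (mul (zw [r]) (weightDepthSum (m - r - s) d)) +
            zcons (r + s) (weightDepthSum (m - (r + s)) d)) := by
      intro r hr
      rw [weightDepthSum_succ, map_sum]
      refine sum_congr rfl fun s hs => ?_
      rw [hmul.single_mul_zcons_weightDepthSum (mem_Icc.mp hr).1 (mem_Icc.mp hs).1, Nat.sub_sub]
    have concat : ∑ r ∈ Icc 1 m, ∑ s ∈ Icc 1 (m - r),
        zcons r (zcons s (weightDepthSum (m - r - s) d)) = weightDepthSum m (d + 2) := by
      simp only [weightDepthSum_succ m (d + 1), weightDepthSum_succ _ d, map_sum]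
    have shuffle : ∑ r ∈ Icc 1 m, ∑ s ∈ Icc 1 (m - r),
        zcons s (mul (zw [r]) (weightDepthSum (m - r - s) d)) =
          ((d : ℤ) + 1) • weightDepthSum m (d + 2) +
            ∑ t ∈ Icc 1 m,
              (((m - t : ℕ) : ℤ) - d) • zcons t (weightDepthSum (m - t) d) := by
      rw [sum_Icc_sum_Icc_sub_comm]
      simp only [Nat.sub_right_comm m, ← map_sum, ih, map_add, map_zsmul, sum_add_distrib,
        ← Finset.smul_sum, ← weightDepthSum_succ]
    have merge : ∑ r ∈ Icc 1 m, ∑ s ∈ Icc 1 (m - r),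
        zcons (r + s) (weightDepthSum (m - (r + s)) d) =
          ∑ t ∈ Icc 1 m, ((t - 1 : ℕ) : ℤ) • zcons t (weightDepthSum (m - t) d) := by
      simp only [sum_Icc_sum_Icc_sub_add m (fun t => zcons t (weightDepthSum (m - t) d)),
        natCast_zsmul]
    have count :
        ∑ t ∈ Icc 1 m, (((m - t : ℕ) : ℤ) - d) • zcons t (weightDepthSum (m - t) d) +
          ∑ t ∈ Icc 1 m, ((t - 1 : ℕ) : ℤ) • zcons t (weightDepthSum (m - t) d) =
            ((m : ℤ) - (d + 1)) • weightDepthSum m (d + 1) := by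
      rw [← sum_add_distrib, weightDepthSum_succ, Finset.smul_sum]
      refine sum_congr rfl fun t ht => ?_
      rw [← add_smul]
      congr 1
      have := mem_Icc.mp ht
      omega
    rw [sum_congr rfl expand]
    simp only [sum_add_distrib, concat, shuffle, merge]
    push_cast
    linear_combination (norm := module) count

end IsQuasiShuffleMul

theorem quasi_shuffle_sum_formula_concat_general
    (mul : QWords →ₗ[ℤ] QWords →ₗ[ℤ] QWords)
    (hunitl : ∀ w : QWords, mul (zw []) w = w)
    (hunitr : ∀ w : QWords, mul w (zw []) = w)
    (hrec : ∀ (r s : ℕ) (u v : List ℕ), 1 ≤ r → 1 ≤ s →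
      (∀ x ∈ u, 1 ≤ x) → (∀ x ∈ v, 1 ≤ x) →
      mul (zw (r :: u)) (zw (s :: v)) =
        zcons r (mul (zw u) (zw (s :: v))) + zcons s (mul (zw (r :: u)) (zw v)) +
          zcons (r + s) (mul (zw u) (zw v)))
    (k n s₁ : ℕ) (hk : 3 ≤ k)
    (hns : s₁ + (k - 1) ≤ n) :
    ∑ c ∈ Finset.univ.filter (fun c : Composition (n - s₁) => c.length = k - 1),
        zcons s₁ (mul (zw [c.blocks.headI]) (zw c.blocks.tail))
      = ((k : ℤ) - 1) •
          (∑ c ∈ Finset.univ.filter (fun c : Composition (n - s₁) => c.length = k - 1),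
            zw (s₁ :: c.blocks))
        + ((n : ℤ) - s₁ - k + 2) •
          (∑ c ∈ Finset.univ.filter (fun c : Composition (n - s₁) => c.length = k - 2),
            zw (s₁ :: c.blocks)) := by
  obtain ⟨d, rfl⟩ : ∃ d, k = d + 2 := ⟨k - 2, by omega⟩
  have hmul : IsQuasiShuffleMul mul := ⟨hunitl, hunitr, hrec⟩
  have lhs : ∑ c ∈ univ.filter (fun c : Composition (n - s₁) => c.length = d + 1),
      zcons s₁ (mul (zw [c.blocks.headI]) (zw c.blocks.tail)) =
        zcons s₁ (∑ r ∈ Icc 1 (n - s₁),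
          mul (zw [r]) (weightDepthSum (n - s₁ - r) d)) := by
    simp only [sum_filter_length_eq_sum_compositionWords _ _
      (fun l => zcons s₁ (mul (zw [l.headI]) (zw l.tail))), sum_compositionWords_succ,
      List.headI_cons, List.tail_cons, weightDepthSum, map_sum]
  have rhs (e : ℕ) : ∑ c ∈ univ.filter (fun c : Composition (n - s₁) => c.length = e),
      zw (s₁ :: c.blocks) = zcons s₁ (weightDepthSum (n - s₁) e) := by
    simp only [sum_filter_length_eq_sum_compositionWords _ _ (fun l => zw (s₁ :: l)),
      weightDepthSum, map_sum, zcons_zw]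
  have hm : ((n - s₁ : ℕ) : ℤ) = n - s₁ := by omega
  rw [show d + 2 - 1 = d + 1 by omega, Nat.add_sub_cancel, lhs, rhs, rhs,
    hmul.sum_single_mul_weightDepthSum, map_add, map_zsmul, map_zsmul, hm]
  push_cast
  congr 2 <;> ring

/-- The lower-depth quasi-shuffle sum formula with left concatenation
by `z_{s₁}`: for `k ≥ 3`, `n ≥ k`, `s₁ ≥ 1` with `n - s₁ ≥ k - 1`. -/
theorem quasi_shuffle_sum_formula_concat
    (mul : QWords →ₗ[ℤ] QWords →ₗ[ℤ] QWords)
    (hunitl : ∀ w : QWords, mul (zw []) w = w)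
    (hunitr : ∀ w : QWords, mul w (zw []) = w)
    (hrec : ∀ (r s : ℕ) (u v : List ℕ), 1 ≤ r → 1 ≤ s →
      (∀ x ∈ u, 1 ≤ x) → (∀ x ∈ v, 1 ≤ x) →
      mul (zw (r :: u)) (zw (s :: v)) =
        zcons r (mul (zw u) (zw (s :: v))) + zcons s (mul (zw (r :: u)) (zw v)) +
          zcons (r + s) (mul (zw u) (zw v)))
    (k n s₁ : ℕ) (hk : 3 ≤ k) (hn : k ≤ n) (hs₁ : 1 ≤ s₁)
    (hns : s₁ + (k - 1) ≤ n) :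
    ∑ c ∈ Finset.univ.filter (fun c : Composition (n - s₁) => c.length = k - 1),
        zcons s₁ (mul (zw [c.blocks.headI]) (zw c.blocks.tail))
      = ((k : ℤ) - 1) •
          (∑ c ∈ Finset.univ.filter (fun c : Composition (n - s₁) => c.length = k - 1),
            zw (s₁ :: c.blocks))
        + ((n : ℤ) - s₁ - k + 2) •
          (∑ c ∈ Finset.univ.filter (fun c : Composition (n - s₁) => c.length = k - 2),
            zw (s₁ :: c.blocks)) :=
  quasi_shuffle_sum_formula_concat_general mul hunitl hunitr hrec k n s₁ hk hns
end
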